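/- arXiv:1801.00421 — 9 statements merged into one kernel-verified Lean document; each statement's English description precedes it below -/
import Mathlib

section
/- Let J and I be nonempty open intervals, let a₁, R ∈ ℝ, and let F, Λ, G : J × I → ℝ be smooth functions such that a₁ + F is nowhere zero, 3Λ − R is nowhere zero, and G is positive, satisfying ∂₃F/(a₁+F) = −∂₃Λ/(3Λ−R) and ∂₁Λ/(3Λ−R) = −∂₁G/(2G) on J × I. Then there exist smooth functions c₅ : J → ℝ and p₂ : I → ℝ such that (a₁+F)³·(3Λ−R) = c₅(x₁) and (3Λ−R)²·G³ = p₂(x₃) for all (x₁,x₃) ∈ J × I. -/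
private lemma const_of_deriv_zero {s : Set ℝ} (hs : Convex ℝ s) {f : ℝ → ℝ}
    (hdiff : ∀ x ∈ s, DifferentiableAt ℝ f x) (hz : ∀ x ∈ s, deriv f x = 0)
    {x y : ℝ} (hx : x ∈ s) (hy : y ∈ s) : f x = f y := by
  have := hs.norm_image_sub_le_of_norm_deriv_le (C := 0) hdiff
    (fun z hz' => by simp [hz z hz']) hy hx
  simp only [zero_mul] at this
  have : ‖f x - f y‖ = 0 := le_antisymm this (norm_nonneg _)
  have := norm_eq_zero.mp this
  linarith [sub_eq_zero.mp this]

/-- Analytic content of Lemma 4.2: from `∂₃F/(a₁+F) = −∂₃Λ/(3Λ−R)` and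
`∂₁Λ/(3Λ−R) = −∂₁G/(2G)` one gets `(a₁+F)³(3Λ−R) = c₅ x₁` and
`(3Λ−R)² G³ = p₂ x₃` for smooth functions `c₅`, `p₂` of one variable. -/
theorem stmt_2 (J I : Set ℝ)
    (hJo : IsOpen J) (hJc : J.OrdConnected) (hJne : J.Nonempty)
    (hIo : IsOpen I) (hIc : I.OrdConnected) (hIne : I.Nonempty)
    (a₁ R : ℝ) (F Lam G : ℝ → ℝ → ℝ)
    (hF : ContDiffOn ℝ (⊤ : ℕ∞) (fun p : ℝ × ℝ => F p.1 p.2) (J ×ˢ I))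
    (hLam : ContDiffOn ℝ (⊤ : ℕ∞) (fun p : ℝ × ℝ => Lam p.1 p.2) (J ×ˢ I))
    (hG : ContDiffOn ℝ (⊤ : ℕ∞) (fun p : ℝ × ℝ => G p.1 p.2) (J ×ˢ I))
    (hFne : ∀ x ∈ J, ∀ y ∈ I, a₁ + F x y ≠ 0)
    (hLamne : ∀ x ∈ J, ∀ y ∈ I, 3 * Lam x y - R ≠ 0)
    (hGpos : ∀ x ∈ J, ∀ y ∈ I, 0 < G x y)
    (heq1 : ∀ x ∈ J, ∀ y ∈ I,
      deriv (F x) y / (a₁ + F x y) = -(deriv (Lam x) y / (3 * Lam x y - R)))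
    (heq2 : ∀ x ∈ J, ∀ y ∈ I,
      deriv (fun s => Lam s y) x / (3 * Lam x y - R)
        = -(deriv (fun s => G s y) x / (2 * G x y))) :
    ∃ c₅ p₂ : ℝ → ℝ, ContDiffOn ℝ (⊤ : ℕ∞) c₅ J ∧ ContDiffOn ℝ (⊤ : ℕ∞) p₂ I ∧
      ∀ x ∈ J, ∀ y ∈ I,
        (a₁ + F x y) ^ 3 * (3 * Lam x y - R) = c₅ x ∧
        (3 * Lam x y - R) ^ 2 * (G x y) ^ 3 = p₂ y := by
  obtain ⟨x₀, hx₀⟩ := hJne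
  obtain ⟨y₀, hy₀⟩ := hIne
  have hIconv : Convex ℝ I := convex_iff_ordConnected.mpr hIc
  have hJconv : Convex ℝ J := convex_iff_ordConnected.mpr hJc
  have hopen : IsOpen (J ×ˢ I) := hJo.prod hIo
  -- slice smoothness
  have sliceY : ∀ f : ℝ → ℝ → ℝ, ContDiffOn ℝ (⊤ : ℕ∞) (fun p : ℝ × ℝ => f p.1 p.2) (J ×ˢ I) →
      ∀ x ∈ J, ∀ y ∈ I, ContDiffAt ℝ (⊤ : ℕ∞) (fun y => f x y) y := by
    intro f hf x hx y hy
    have h1 : ContDiffAt ℝ (⊤ : ℕ∞) (fun p : ℝ × ℝ => f p.1 p.2) (x, y) :=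
      hf.contDiffAt (hopen.mem_nhds ⟨hx, hy⟩)
    exact h1.comp y (contDiffAt_const.prodMk contDiffAt_id)
  have sliceX : ∀ f : ℝ → ℝ → ℝ, ContDiffOn ℝ (⊤ : ℕ∞) (fun p : ℝ × ℝ => f p.1 p.2) (J ×ˢ I) →
      ∀ x ∈ J, ∀ y ∈ I, ContDiffAt ℝ (⊤ : ℕ∞) (fun s => f s y) x := by
    intro f hf x hx y hy
    have h1 : ContDiffAt ℝ (⊤ : ℕ∞) (fun p : ℝ × ℝ => f p.1 p.2) (x, y) :=
      hf.contDiffAt (hopen.mem_nhds ⟨hx, hy⟩)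
    exact h1.comp x (contDiffAt_id.prodMk contDiffAt_const)
  -- the two combined functions
  set H : ℝ → ℝ → ℝ := fun x y => (a₁ + F x y) ^ 3 * (3 * Lam x y - R) with hHdef
  set K : ℝ → ℝ → ℝ := fun x y => (3 * Lam x y - R) ^ 2 * (G x y) ^ 3 with hKdef
  -- derivative in y of H x is zero on I
  have hHderiv : ∀ x ∈ J, ∀ y ∈ I, HasDerivAt (fun y => H x y)
      (3 * (a₁ + F x y) ^ 2 * deriv (F x) y * (3 * Lam x y - R)
        + (a₁ + F x y) ^ 3 * (3 * deriv (Lam x) y)) y := by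
    intro x hx y hy
    have hdF : HasDerivAt (fun y => F x y) (deriv (F x) y) y :=
      ((sliceY F hF x hx y hy).differentiableAt (by simp)).hasDerivAt
    have hdL : HasDerivAt (fun y => Lam x y) (deriv (Lam x) y) y :=
      ((sliceY Lam hLam x hx y hy).differentiableAt (by simp)).hasDerivAt
    have h1 : HasDerivAt (fun y => (a₁ + F x y) ^ 3)
        (3 * (a₁ + F x y) ^ 2 * deriv (F x) y) y := by
      have := ((hasDerivAt_const y a₁).fun_add hdF).fun_pow 3
      simpa using this
    have h2 : HasDerivAt (fun y => 3 * Lam x y - R) (3 * deriv (Lam x) y) y := by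
      simpa using (hdL.const_mul 3).sub_const R
    simpa [hHdef] using h1.fun_mul h2
  have hHzero : ∀ x ∈ J, ∀ y ∈ I, deriv (fun y => H x y) y = 0 := by
    intro x hx y hy
    rw [(hHderiv x hx y hy).deriv]
    have key := heq1 x hx y hy
    have hne1 := hFne x hx y hy
    have hne2 := hLamne x hx y hy
    field_simp at key
    linear_combination 3 * (a₁ + F x y) ^ 2 * key
  -- derivative in x of K · y is zero on J
  have hKderiv : ∀ x ∈ J, ∀ y ∈ I, HasDerivAt (fun s => K s y)
      (2 * (3 * Lam x y - R) * (3 * deriv (fun s => Lam s y) x) * (G x y) ^ 3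
        + (3 * Lam x y - R) ^ 2 * (3 * (G x y) ^ 2 * deriv (fun s => G s y) x)) x := by
    intro x hx y hy
    have hdL : HasDerivAt (fun s => Lam s y) (deriv (fun s => Lam s y) x) x :=
      ((sliceX Lam hLam x hx y hy).differentiableAt (by simp)).hasDerivAt
    have hdG : HasDerivAt (fun s => G s y) (deriv (fun s => G s y) x) x :=
      ((sliceX G hG x hx y hy).differentiableAt (by simp)).hasDerivAt
    have h1 : HasDerivAt (fun s => (3 * Lam s y - R) ^ 2)
        (2 * (3 * Lam x y - R) * (3 * deriv (fun s => Lam s y) x)) x := by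
      have := ((hdL.const_mul 3).sub_const R).fun_pow 2
      simpa [mul_comm, mul_assoc, mul_left_comm] using this
    have h2 : HasDerivAt (fun s => (G s y) ^ 3)
        (3 * (G x y) ^ 2 * deriv (fun s => G s y) x) x := by
      have := hdG.fun_pow 3
      simpa using this
    simpa [hKdef] using h1.fun_mul h2
  have hKzero : ∀ x ∈ J, ∀ y ∈ I, deriv (fun s => K s y) x = 0 := by
    intro x hx y hy
    rw [(hKderiv x hx y hy).deriv]
    have key := heq2 x hx y hy
    have hne2 := hLamne x hx y hy
    have hne3 := (hGpos x hx y hy).ne'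
    field_simp at key
    linear_combination 3 * (3 * Lam x y - R) * (G x y) ^ 2 * key
  refine ⟨fun x => H x y₀, fun y => K x₀ y, ?_, ?_, ?_⟩
  · have h1 : ContDiffOn ℝ (⊤ : ℕ∞) (fun x : ℝ => (x, y₀)) J :=
      (contDiff_id.prodMk contDiff_const).contDiffOn
    have h2 : ContDiffOn ℝ (⊤ : ℕ∞) (fun p : ℝ × ℝ => H p.1 p.2) (J ×ˢ I) := by
      exact (((contDiffOn_const.add hF).pow 3).mul
        ((hLam.const_smul (3:ℝ)).sub contDiffOn_const))
    have := h2.comp h1 (fun x hx => ⟨hx, hy₀⟩)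
    simpa [hHdef, Function.comp_def] using this
  · have h1 : ContDiffOn ℝ (⊤ : ℕ∞) (fun y : ℝ => (x₀, y)) I :=
      (contDiff_const.prodMk contDiff_id).contDiffOn
    have h2 : ContDiffOn ℝ (⊤ : ℕ∞) (fun p : ℝ × ℝ => K p.1 p.2) (J ×ˢ I) := by
      exact ((((hLam.const_smul (3:ℝ)).sub contDiffOn_const).pow 2).mul (hG.pow 3))
    have := h2.comp h1 (fun y hy => ⟨hx₀, hy⟩)
    simpa [hKdef, Function.comp_def] using this
  · intro x hx y hy
    constructor
    · have hdiff : ∀ z ∈ I, DifferentiableAt ℝ (fun y => H x y) z := fun z hz =>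
        ((((sliceY F hF x hx z hz).differentiableAt (by simp)).const_add a₁).pow 3).mul
          ((((sliceY Lam hLam x hx z hz).differentiableAt (by simp)).const_mul 3).sub_const R)
      exact const_of_deriv_zero hIconv hdiff (fun z hz => hHzero x hx z hz) hy hy₀
    · have hdiff : ∀ z ∈ J, DifferentiableAt ℝ (fun s => K s y) z := fun z hz =>
        (((((sliceX Lam hLam z hz y hy).differentiableAt (by simp)).const_mul 3).sub_const R).pow 2).mul
          (((sliceX G hG z hz y hy).differentiableAt (by simp)).pow 3)
      exact const_of_deriv_zero hJconv hdiff (fun z hz => hKzero z hz y hy) hx hx₀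
end

section
/- Let λ ∈ ℝ, let J and I be nonempty open intervals, let v : I → ℝ be smooth and positive, and let f : J × I → ℝ be smooth, satisfying on J × I the system: ∂₁∂₁f = λ, ∂₁∂₃f = 0, (v'/(2v))·∂₃f = v''/(2v) − (1/4)(v'/v)² + λ, and ∂₃∂₃f = v''/(2v) − (1/4)(v'/v)² + λ (where v and its derivatives are evaluated at x₃). Then there exist a constant a ∈ ℝ and a smooth function k : I → ℝ such that f(x₁,x₃) = (λ/2)x₁² + a·x₁ + k(x₃) for all (x₁,x₃) ∈ J × I; moreover there is a constant C with k' = C·√v on I, and the function k'' − (k')²/2 + λ·k is constant on I. -/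
lemma aux_const {s : Set ℝ} (ho : IsOpen s) (hc : Convex ℝ s) {u : ℝ → ℝ}
    (hu : ∀ z ∈ s, HasDerivAt u 0 z) {x y : ℝ} (hx : x ∈ s) (hy : y ∈ s) : u x = u y := by
  refine hc.is_const_of_fderivWithin_eq_zero
    (fun z hz => (hu z hz).differentiableAt.differentiableWithinAt) (fun z hz => ?_) hx hy
  rw [fderivWithin_of_isOpen ho hz]
  have h := (hu z hz).hasFDerivAt.fderiv
  rw [h]; ext t; simp

lemma sliceDiff1 {P : ℝ × ℝ → ℝ} {U : Set (ℝ × ℝ)} (hP : ContDiffOn ℝ (⊤ : ℕ∞) P U) (hU : IsOpen U)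
    {x y : ℝ} (h : (x, y) ∈ U) : DifferentiableAt ℝ (fun s => P (s, y)) x :=
  ((hP.contDiffAt (hU.mem_nhds h)).differentiableAt (by simp)).comp x
    (differentiableAt_id.prodMk (differentiableAt_const y))

lemma sliceDiff2 {P : ℝ × ℝ → ℝ} {U : Set (ℝ × ℝ)} (hP : ContDiffOn ℝ (⊤ : ℕ∞) P U) (hU : IsOpen U)
    {x y : ℝ} (h : (x, y) ∈ U) : DifferentiableAt ℝ (fun t => P (x, t)) y :=
  ((hP.contDiffAt (hU.mem_nhds h)).differentiableAt (by simp)).comp y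
    ((differentiableAt_const x).prodMk differentiableAt_id)

/-- Forward direction of Lemma 3.8: the coordinate soliton system for
`g = dx₁² + v(x₃)dx₂² + dx₃²` forces `f (x₁, x₃) = (λ/2)x₁² + a·x₁ + k x₃`, with
`k' = C·√v` and `k'' − (k')²/2 + λk` constant. -/
theorem stmt_3 (lam : ℝ) (J I : Set ℝ)
    (hJo : IsOpen J) (hJc : J.OrdConnected) (hJne : J.Nonempty)
    (hIo : IsOpen I) (hIc : I.OrdConnected) (hIne : I.Nonempty)
    (v : ℝ → ℝ) (hv : ContDiffOn ℝ (⊤ : ℕ∞) v I) (hvpos : ∀ y ∈ I, 0 < v y)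
    (f : ℝ → ℝ → ℝ)
    (hf : ContDiffOn ℝ (⊤ : ℕ∞) (fun p : ℝ × ℝ => f p.1 p.2) (J ×ˢ I))
    (h11 : ∀ x ∈ J, ∀ y ∈ I, deriv (deriv (fun s => f s y)) x = lam)
    (h13 : ∀ x ∈ J, ∀ y ∈ I, deriv (fun s => deriv (f s) y) x = 0)
    (h22 : ∀ x ∈ J, ∀ y ∈ I,
      (deriv v y / (2 * v y)) * deriv (f x) y
        = deriv (deriv v) y / (2 * v y) - (1/4) * (deriv v y / v y) ^ 2 + lam)
    (h33 : ∀ x ∈ J, ∀ y ∈ I,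
      deriv (deriv (f x)) y
        = deriv (deriv v) y / (2 * v y) - (1/4) * (deriv v y / v y) ^ 2 + lam) :
    ∃ (a : ℝ) (k : ℝ → ℝ), ContDiffOn ℝ (⊤ : ℕ∞) k I ∧
      (∀ x ∈ J, ∀ y ∈ I, f x y = (lam / 2) * x ^ 2 + a * x + k y) ∧
      (∃ C : ℝ, ∀ y ∈ I, deriv k y = C * Real.sqrt (v y)) ∧
      (∃ D : ℝ, ∀ y ∈ I,
        deriv (deriv k) y - (deriv k y) ^ 2 / 2 + lam * k y = D) := by
  obtain ⟨x₀, hx₀⟩ := hJne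
  obtain ⟨y₀, hy₀⟩ := hIne
  have hJcv : Convex ℝ J := hJc.convex
  have hIcv : Convex ℝ I := hIc.convex
  have hUo : IsOpen (J ×ˢ I) := hJo.prod hIo
  set F : ℝ × ℝ → ℝ := fun p => f p.1 p.2 with hFdef
  set G : ℝ × ℝ → (ℝ × ℝ →L[ℝ] ℝ) := fderiv ℝ F with hGdef
  have hGc : ContDiffOn ℝ (⊤ : ℕ∞) G (J ×ˢ I) := hf.fderiv_of_isOpen hUo (by simp)
  set P1 : ℝ × ℝ → ℝ := fun p => G p (1, 0) with hP1def
  set P2 : ℝ × ℝ → ℝ := fun p => G p (0, 1) with hP2def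
  have hP1c : ContDiffOn ℝ (⊤ : ℕ∞) P1 (J ×ˢ I) :=
    (ContinuousLinearMap.apply ℝ ℝ ((1 : ℝ), (0 : ℝ))).contDiff.comp_contDiffOn hGc
  have hP2c : ContDiffOn ℝ (⊤ : ℕ∞) P2 (J ×ˢ I) :=
    (ContinuousLinearMap.apply ℝ ℝ ((0 : ℝ), (1 : ℝ))).contDiff.comp_contDiffOn hGc
  -- first-order partial derivatives
  have key1 : ∀ x ∈ J, ∀ y ∈ I, HasDerivAt (fun s => f s y) (P1 (x, y)) x := by
    intro x hx y hy
    have hFd : DifferentiableAt ℝ F (x, y) :=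
      (hf.contDiffAt (hUo.mem_nhds ⟨hx, hy⟩)).differentiableAt (by simp)
    have h := hFd.hasFDerivAt.comp_hasDerivAt x
      ((hasDerivAt_id x).prodMk (hasDerivAt_const x y))
    exact h
  have key2 : ∀ x ∈ J, ∀ y ∈ I, HasDerivAt (f x) (P2 (x, y)) y := by
    intro x hx y hy
    have hFd : DifferentiableAt ℝ F (x, y) :=
      (hf.contDiffAt (hUo.mem_nhds ⟨hx, hy⟩)).differentiableAt (by simp)
    have h := hFd.hasFDerivAt.comp_hasDerivAt y
      ((hasDerivAt_const y x).prodMk (hasDerivAt_id y))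
    exact h
  -- Step A : ∂₃ f is independent of x
  have stepA : ∀ x ∈ J, ∀ y ∈ I, P2 (x, y) = P2 (x₀, y) := by
    intro x hx y hy
    have hu : ∀ s ∈ J, HasDerivAt (fun s => P2 (s, y)) 0 s := by
      intro s hs
      have hd : DifferentiableAt ℝ (fun s => P2 (s, y)) s := sliceDiff1 hP2c hUo ⟨hs, hy⟩
      have heq : (fun s => P2 (s, y)) =ᶠ[nhds s] (fun s => deriv (f s) y) :=
        Filter.eventuallyEq_of_mem (hJo.mem_nhds hs) (fun t ht => ((key2 t ht y hy).deriv).symm)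
      have : deriv (fun s => P2 (s, y)) s = 0 := by
        rw [heq.deriv_eq]; exact h13 s hs y hy
      simpa [this] using hd.hasDerivAt
    exact aux_const hJo hJcv hu hx hx₀
  -- Step B : separation of variables
  have stepB : ∀ x ∈ J, ∀ y ∈ I, f x y = f x₀ y + (f x y₀ - f x₀ y₀) := by
    intro x hx y hy
    have hu : ∀ t ∈ I, HasDerivAt (fun t => f x t - f x₀ t) 0 t := by
      intro t ht
      have := (key2 x hx t ht).sub (key2 x₀ hx₀ t ht)
      rwa [stepA x hx t ht, sub_self] at this
    have := aux_const hIo hIcv hu hy hy₀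
    linarith [this]
  -- Step C : P1(x, y₀) = lam * x + a
  set a : ℝ := P1 (x₀, y₀) - lam * x₀ with hadef
  have stepC : ∀ x ∈ J, P1 (x, y₀) = lam * x + a := by
    intro x hx
    have hu : ∀ s ∈ J, HasDerivAt (fun s => P1 (s, y₀) - lam * s) 0 s := by
      intro s hs
      have hd1 : DifferentiableAt ℝ (fun s => P1 (s, y₀)) s := sliceDiff1 hP1c hUo ⟨hs, hy₀⟩
      have heq : (fun s => P1 (s, y₀)) =ᶠ[nhds s] deriv (fun s => f s y₀) :=
        Filter.eventuallyEq_of_mem (hJo.mem_nhds hs) (fun t ht => ((key1 t ht y₀ hy₀).deriv).symm)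
      have hder : deriv (fun s => P1 (s, y₀)) s = lam := by
        rw [heq.deriv_eq]; exact h11 s hs y₀ hy₀
      have := (hd1.hasDerivAt).sub ((hasDerivAt_id s).const_mul lam)
      rw [hder] at this
      exact this.congr_deriv (by ring)
    have := aux_const hJo hJcv hu hx hx₀
    simp only [hadef]; linarith [this]
  -- Step D : f x y₀ explicit
  have stepD : ∀ x ∈ J, f x y₀ = (lam / 2) * x ^ 2 + a * x + (f x₀ y₀ - ((lam / 2) * x₀ ^ 2 + a * x₀)) := by
    intro x hx
    have hu : ∀ s ∈ J, HasDerivAt (fun s => f s y₀ - ((lam / 2) * s ^ 2 + a * s)) 0 s := by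
      intro s hs
      have hq : HasDerivAt (fun s : ℝ => (lam / 2) * s ^ 2 + a * s) (lam * s + a) s := by
        have h1 : HasDerivAt (fun s : ℝ => (lam / 2) * s ^ 2) ((lam / 2) * (2 * s)) s :=
          ((hasDerivAt_pow 2 s).const_mul (lam / 2)).congr_deriv (by ring)
        have h2 : HasDerivAt (fun s : ℝ => a * s) a s := by
          simpa using (hasDerivAt_id s).const_mul a
        have := h1.add h2
        exact this.congr_deriv (by ring)
      have := (key1 s hs y₀ hy₀).sub hq
      rw [stepC s hs] at this
      exact this.congr_deriv (by ring)
    have := aux_const hJo hJcv hu hx hx₀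
    have hx0e : f x₀ y₀ - ((lam / 2) * x₀ ^ 2 + a * x₀) = (fun s => f s y₀ - ((lam / 2) * s ^ 2 + a * s)) x₀ := rfl
    linarith [this]
  set k : ℝ → ℝ := fun y => f x₀ y - ((lam / 2) * x₀ ^ 2 + a * x₀) with hkdef
  have hform : ∀ x ∈ J, ∀ y ∈ I, f x y = (lam / 2) * x ^ 2 + a * x + k y := by
    intro x hx y hy
    have := stepB x hx y hy
    have h2 := stepD x hx
    simp only [hkdef]
    linarith
  have hksmooth : ContDiffOn ℝ (⊤ : ℕ∞) k I := by
    have : ContDiffOn ℝ (⊤ : ℕ∞) (fun y => f x₀ y) I := by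
      have hmap : Set.MapsTo (fun y : ℝ => ((x₀ : ℝ), y)) I (J ×ˢ I) := fun y hy => ⟨hx₀, hy⟩
      exact hf.comp ((contDiff_const.prodMk contDiff_id).contDiffOn) hmap
    exact this.sub contDiffOn_const
  -- derivative of k
  set φ : ℝ → ℝ := fun y => P2 (x₀, y) with hφdef
  have hKd : ∀ y ∈ I, HasDerivAt k (φ y) y := by
    intro y hy
    exact (key2 x₀ hx₀ y hy).sub_const _
  have hφd : ∀ y ∈ I, DifferentiableAt ℝ φ y := fun y hy => sliceDiff2 hP2c hUo ⟨hx₀, hy⟩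
  set ψ : ℝ → ℝ := deriv φ with hψdef
  have hφψ : ∀ y ∈ I, HasDerivAt φ (ψ y) y := fun y hy => (hφd y hy).hasDerivAt
  have hfφ : ∀ y ∈ I, deriv (f x₀) =ᶠ[nhds y] φ := fun y hy =>
    Filter.eventuallyEq_of_mem (hIo.mem_nhds hy) (fun t ht => (key2 x₀ hx₀ t ht).deriv)
  have hψRHS : ∀ y ∈ I, ψ y
      = deriv (deriv v) y / (2 * v y) - (1/4) * (deriv v y / v y) ^ 2 + lam := by
    intro y hy
    have := (hfφ y hy).deriv_eq
    rw [hψdef, ← this]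
    exact h33 x₀ hx₀ y hy
  have hφ22 : ∀ y ∈ I, (deriv v y / (2 * v y)) * φ y
      = deriv (deriv v) y / (2 * v y) - (1/4) * (deriv v y / v y) ^ 2 + lam := by
    intro y hy
    have := h22 x₀ hx₀ y hy
    rwa [(key2 x₀ hx₀ y hy).deriv] at this
  have hψφ : ∀ y ∈ I, ψ y = (deriv v y / (2 * v y)) * φ y := by
    intro y hy; rw [hψRHS y hy, hφ22 y hy]
  -- sqrt facts
  have hwpos : ∀ y ∈ I, 0 < Real.sqrt (v y) := fun y hy => Real.sqrt_pos.mpr (hvpos y hy)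
  have hw2 : ∀ y ∈ I, (Real.sqrt (v y)) ^ 2 = v y := fun y hy => Real.sq_sqrt (hvpos y hy).le
  have hvd : ∀ y ∈ I, HasDerivAt v (deriv v y) y := fun y hy =>
    ((hv.contDiffAt (hIo.mem_nhds hy)).differentiableAt (by simp)).hasDerivAt
  have hwd : ∀ y ∈ I, HasDerivAt (fun t => Real.sqrt (v t))
      (deriv v y / (2 * Real.sqrt (v y))) y := fun y hy =>
    (hvd y hy).sqrt (hvpos y hy).ne'
  -- Step G : φ / sqrt v is constant
  obtain ⟨C, hφC⟩ : ∃ C : ℝ, ∀ y ∈ I, φ y = C * Real.sqrt (v y) := by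
    refine ⟨φ y₀ / Real.sqrt (v y₀), ?_⟩
    have hρ : ∀ y ∈ I, HasDerivAt (fun t => φ t / Real.sqrt (v t)) 0 y := by
      intro y hy
      have h := (hφψ y hy).div (hwd y hy) (hwpos y hy).ne'
      have hz : (ψ y * Real.sqrt (v y) - φ y * (deriv v y / (2 * Real.sqrt (v y))))
          / (Real.sqrt (v y)) ^ 2 = 0 := by
        rw [hψφ y hy]
        have h2 := hw2 y hy
        have hne := (hwpos y hy).ne'
        have hvne := (hvpos y hy).ne'
        field_simp
        linear_combination (deriv v y * φ y) * h2
      rwa [hz] at h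
    intro y hy
    have := aux_const hIo hIcv hρ hy hy₀
    rw [← this, div_mul_cancel₀]
    exact (hwpos y hy).ne'
  -- second derivative of k
  have hkφ : ∀ y ∈ I, deriv k =ᶠ[nhds y] φ := fun y hy =>
    Filter.eventuallyEq_of_mem (hIo.mem_nhds hy) (fun t ht => (hKd t ht).deriv)
  have hddk : ∀ y ∈ I, deriv (deriv k) y = ψ y := fun y hy => (hkφ y hy).deriv_eq
  have hv'c : ContDiffOn ℝ (⊤ : ℕ∞) (deriv v) I := hv.deriv_of_isOpen hIo (by simp)
  have hv'd : ∀ y ∈ I, HasDerivAt (deriv v) (deriv (deriv v) y) y := fun y hy =>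
    ((hv'c.contDiffAt (hIo.mem_nhds hy)).differentiableAt (by simp)).hasDerivAt
  -- the function E
  set E : ℝ → ℝ := fun t => C * deriv v t / (2 * Real.sqrt (v t)) - C ^ 2 * v t / 2 + lam * k t
    with hEdef
  have hEd : ∀ y ∈ I, HasDerivAt E 0 y := by
    intro y hy
    have hnum : HasDerivAt (fun t => C * deriv v t) (C * deriv (deriv v) y) y :=
      (hv'd y hy).const_mul C
    have hden : HasDerivAt (fun t => 2 * Real.sqrt (v t))
        (2 * (deriv v y / (2 * Real.sqrt (v y)))) y := (hwd y hy).const_mul 2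
    have hdenne : (2 : ℝ) * Real.sqrt (v y) ≠ 0 := by have := hwpos y hy; positivity
    have hdiv := hnum.div hden hdenne
    have hp2 : HasDerivAt (fun t => C ^ 2 * v t / 2) (C ^ 2 * deriv v y / 2) y :=
      ((hvd y hy).const_mul (C ^ 2)).div_const 2
    have hp3 : HasDerivAt (fun t => lam * k t) (lam * φ y) y := (hKd y hy).const_mul lam
    have htot := (hdiv.sub hp2).add hp3
    have hz : (C * deriv (deriv v) y * (2 * Real.sqrt (v y))
          - C * deriv v y * (2 * (deriv v y / (2 * Real.sqrt (v y)))))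
          / (2 * Real.sqrt (v y)) ^ 2
        - C ^ 2 * deriv v y / 2 + lam * φ y = 0 := by
      have hlam : deriv v y / (2 * v y) * (C * Real.sqrt (v y))
          = deriv (deriv v) y / (2 * v y) - (1/4) * (deriv v y / v y) ^ 2 + lam := by
        rw [← hφC y hy]; exact hφ22 y hy
      have h2 := hw2 y hy
      have hne := (hwpos y hy).ne'
      rw [hφC y hy]
      set w := Real.sqrt (v y) with hwdef
      rw [← h2] at hlam
      field_simp at hlam ⊢
      have hl3 : 2*C*deriv v y*w^3
          = 2*deriv (deriv v) y*w^2 - deriv v y^2 + 4*lam*w^4 := by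
        apply mul_right_cancel₀ (mul_ne_zero (by norm_num : (8:ℝ) ≠ 0) (pow_ne_zero 4 hne))
        linear_combination (4 * w^4) * hlam
      linear_combination (-C) * hl3
    rwa [hz] at htot
  set D : ℝ := E y₀ with hDdef
  have hEconst : ∀ y ∈ I, E y = D := fun y hy => aux_const hIo hIcv hEd hy hy₀
  refine ⟨a, k, hksmooth, hform, ⟨C, fun y hy => by rw [(hKd y hy).deriv]; exact hφC y hy⟩,
    ⟨D, fun y hy => ?_⟩⟩
  have hψE : ψ y = C * deriv v y / (2 * Real.sqrt (v y)) := by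
    have h2 := hw2 y hy
    have hne := (hwpos y hy).ne'
    rw [hψφ y hy, hφC y hy]
    set w := Real.sqrt (v y) with hwdef
    rw [← h2]
    field_simp
  have hφ2 : (φ y) ^ 2 = C ^ 2 * v y := by
    rw [hφC y hy, mul_pow, hw2 y hy]
  rw [hddk y hy, (hKd y hy).deriv, ← hEconst y hy, hEdef]
  simp only []
  rw [hψE, hφ2]
  try ring
end

section
/- Let λ ∈ ℝ and a ∈ ℝ with a ≠ 0, let I be a nonempty open interval, and let A, B, h : I → ℝ be smooth with A and B nowhere zero, satisfying on I: −2AB = a·e^h, A' = A·(A − B), and −B·h' = λ − B' + B² + A·B. Then λ + 2AB = 0 on I, and h is constant on I. -/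
/-- Key ODE step in the proof of Lemma 3.8: with `A = Γ₁₁³`, `B = Γ₂₂³`, `h = f`,
the relations `−2AB = a·e^h`, `A' = A(A−B)` and `−B·h' = λ − B' + B² + AB` force
`λ + 2AB = 0` and `h` constant. -/
theorem stmt_5 (lam a : ℝ) (ha : a ≠ 0) (I : Set ℝ)
    (hIo : IsOpen I) (hIc : I.OrdConnected) (hIne : I.Nonempty)
    (A B h : ℝ → ℝ)
    (hA : ContDiffOn ℝ (⊤ : ℕ∞) A I) (hB : ContDiffOn ℝ (⊤ : ℕ∞) B I)
    (hh : ContDiffOn ℝ (⊤ : ℕ∞) h I)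
    (hAne : ∀ x ∈ I, A x ≠ 0) (hBne : ∀ x ∈ I, B x ≠ 0)
    (h1 : ∀ x ∈ I, -2 * A x * B x = a * Real.exp (h x))
    (h2 : ∀ x ∈ I, deriv A x = A x * (A x - B x))
    (h3 : ∀ x ∈ I,
      -(B x) * deriv h x = lam - deriv B x + (B x) ^ 2 + A x * B x) :
    (∀ x ∈ I, lam + 2 * A x * B x = 0) ∧ ∃ c : ℝ, ∀ x ∈ I, h x = c := by
  have main : ∀ x ∈ I, lam + 2 * A x * B x = 0 := by
    intro x hx
    have hmem : I ∈ nhds x := hIo.mem_nhds hx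
    have hA' : HasDerivAt A (deriv A x) x :=
      (((hA.differentiableOn (by simp)) x hx).differentiableAt hmem).hasDerivAt
    have hB' : HasDerivAt B (deriv B x) x :=
      (((hB.differentiableOn (by simp)) x hx).differentiableAt hmem).hasDerivAt
    have hh' : HasDerivAt h (deriv h x) x :=
      (((hh.differentiableOn (by simp)) x hx).differentiableAt hmem).hasDerivAt
    have hL : HasDerivAt (fun y => -2 * A y * B y)
        (-2 * (deriv A x * B x + A x * deriv B x)) x := by
      have : HasDerivAt (fun y => -2 * A y * B y)
          (-2 * deriv A x * B x + -2 * A x * deriv B x) x := ((hA'.const_mul (-2 : ℝ)).mul hB')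
      convert this using 1
      ring
    have hR : HasDerivAt (fun y => a * Real.exp (h y))
        (a * (Real.exp (h x) * deriv h x)) x := (hh'.exp).const_mul a
    have heq : (fun y => -2 * A y * B y) =ᶠ[nhds x] fun y => a * Real.exp (h y) :=
      Filter.eventuallyEq_of_mem hmem h1
    have hL' : HasDerivAt (fun y => a * Real.exp (h y))
        (-2 * (deriv A x * B x + A x * deriv B x)) x := hL.congr_of_eventuallyEq heq.symm
    have eq1 : -2 * (deriv A x * B x + A x * deriv B x)
        = a * (Real.exp (h x) * deriv h x) := hL'.unique hR
    have e1 := h1 x hx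
    have e2 := h2 x hx
    have e3 := h3 x hx
    have key : A x * (lam + 2 * A x * B x) = 0 := by
      linear_combination (-(1:ℝ)/2) * eq1 + (deriv h x / 2) * e1
        + (-(B x)) * e2 + (-(A x)) * e3
    rcases mul_eq_zero.mp key with hc | hc
    · exact absurd hc (hAne x hx)
    · exact hc
  refine ⟨main, Real.log (lam / a), ?_⟩
  intro x hx
  have e1 := h1 x hx
  have hlam : a * Real.exp (h x) = lam := by linarith [main x hx]
  have hexp : Real.exp (h x) = lam / a := by
    field_simp at hlam ⊢; linarith
  calc h x = Real.log (Real.exp (h x)) := (Real.log_exp _).symm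
    _ = Real.log (lam / a) := by rw [hexp]
end

section
/- Let m, R, y ∈ ℝ with m ≠ 0, let I and J be nonempty open intervals, and let q : I → ℝ and b, c : J → ℝ be smooth with q' nowhere zero on I, b' nowhere zero on J, c nowhere zero on J, and q(x₃) + b(x₁) > 0 for all (x₁,x₃) ∈ J × I. Suppose that for all (x₁,x₃) ∈ J × I the following four identities hold (q and its derivatives evaluated at x₃; b, c and their derivatives at x₁): (1) m(q+b)³ + R/6 = (q+b)(q''+b'') − (q')² − (b')²; (2) 2m(q+b)³ − R/6 = ((q'''/q')(q+b) − 2q'')(q+b) + (q')² + (b')²; (3) 2m(q+b)³ − R/6 = ((c''/c)(q+b) − c'b'/c − b'' − y/c)(q+b) + (q')² + (b')²; (4) m(q+b)³ + R/6 = (b'c'/c + q'' + y/c)(q+b) − (q')² − (b')². Then b''·c = b'·c' + y on J, and there exist constants l, α, k ∈ ℝ such that (q')² − 2m·q³ − l·q² + α·q + k = 0 on I and (b')² − 2m·b³ + l·b² + α·b + R/6 − k = 0 on J. -/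
lemma my_const_of_deriv_zero {f : ℝ → ℝ} {s : Set ℝ} (hs : IsOpen s) (hcon : Convex ℝ s)
    (hf : DifferentiableOn ℝ f s) (h' : ∀ x ∈ s, deriv f x = 0) {x y : ℝ}
    (hx : x ∈ s) (hy : y ∈ s) : f x = f y := by
  refine hcon.is_const_of_fderivWithin_eq_zero hf (fun z hz => ?_) hx hy
  rw [fderivWithin_of_isOpen hs hz]
  refine ContinuousLinearMap.ext_ring ?_
  simp [fderiv_apply_one_eq_deriv, h' z hz]

/-- Lemma 4.5 (forward direction) in analytic form: the four coordinate identities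
for the metric `g = (q(x₃)+b(x₁))^{−2}(dx₁² + (q')²dx₂² + dx₃²)` with potential
`f = c(x₁)/(q+b) − a₁` imply `b''c = b'c' + y` and the cubic first-order ODEs for
`q` and `b`. -/
theorem stmt_6 (m R y : ℝ) (hm : m ≠ 0) (I J : Set ℝ)
    (hIo : IsOpen I) (hIc : I.OrdConnected) (hIne : I.Nonempty)
    (hJo : IsOpen J) (hJc : J.OrdConnected) (hJne : J.Nonempty)
    (q b c : ℝ → ℝ)
    (hq : ContDiffOn ℝ (⊤ : ℕ∞) q I) (hb : ContDiffOn ℝ (⊤ : ℕ∞) b J)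
    (hc : ContDiffOn ℝ (⊤ : ℕ∞) c J)
    (hq' : ∀ t ∈ I, deriv q t ≠ 0) (hb' : ∀ s ∈ J, deriv b s ≠ 0)
    (hcne : ∀ s ∈ J, c s ≠ 0)
    (hpos : ∀ s ∈ J, ∀ t ∈ I, 0 < q t + b s)
    (h1 : ∀ s ∈ J, ∀ t ∈ I,
      m * (q t + b s) ^ 3 + R / 6
        = (q t + b s) * (deriv (deriv q) t + deriv (deriv b) s)
          - (deriv q t) ^ 2 - (deriv b s) ^ 2)
    (h2 : ∀ s ∈ J, ∀ t ∈ I,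
      2 * m * (q t + b s) ^ 3 - R / 6
        = ((deriv (deriv (deriv q)) t / deriv q t) * (q t + b s)
            - 2 * deriv (deriv q) t) * (q t + b s)
          + (deriv q t) ^ 2 + (deriv b s) ^ 2)
    (h3 : ∀ s ∈ J, ∀ t ∈ I,
      2 * m * (q t + b s) ^ 3 - R / 6
        = ((deriv (deriv c) s / c s) * (q t + b s)
            - deriv c s * deriv b s / c s - deriv (deriv b) s - y / c s) * (q t + b s)
          + (deriv q t) ^ 2 + (deriv b s) ^ 2)
    (h4 : ∀ s ∈ J, ∀ t ∈ I,
      m * (q t + b s) ^ 3 + R / 6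
        = (deriv b s * deriv c s / c s + deriv (deriv q) t + y / c s) * (q t + b s)
          - (deriv q t) ^ 2 - (deriv b s) ^ 2) :
    (∀ s ∈ J, deriv (deriv b) s * c s = deriv b s * deriv c s + y) ∧
    ∃ l α k : ℝ,
      (∀ t ∈ I,
        (deriv q t) ^ 2 - 2 * m * (q t) ^ 3 - l * (q t) ^ 2 + α * q t + k = 0) ∧
      (∀ s ∈ J,
        (deriv b s) ^ 2 - 2 * m * (b s) ^ 3 + l * (b s) ^ 2 + α * b s
          + R / 6 - k = 0) := by
  obtain ⟨t₀, ht₀⟩ := hIne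
  obtain ⟨s₀, hs₀⟩ := hJne
  have hIconv : Convex ℝ I := convex_iff_ordConnected.mpr hIc
  -- Part 1
  have part1 : ∀ s ∈ J, deriv (deriv b) s * c s = deriv b s * deriv c s + y := by
    intro s hs
    have e1 := h1 s hs t₀ ht₀
    have e4 := h4 s hs t₀ ht₀
    have hw : q t₀ + b s ≠ 0 := (hpos s hs t₀ ht₀).ne'
    have hcs := hcne s hs
    have key : (deriv b s * deriv c s / c s + y / c s - deriv (deriv b) s)
        * (q t₀ + b s) = 0 := by linear_combination e1 - e4
    have key2 : deriv b s * deriv c s / c s + y / c s - deriv (deriv b) s = 0 :=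
      (mul_eq_zero.mp key).resolve_right hw
    field_simp at key2
    linarith
  refine ⟨part1, ?_⟩
  -- b takes two distinct values
  obtain ⟨s₁, hs₁, s₂, hs₂, hbne⟩ : ∃ s₁ ∈ J, ∃ s₂ ∈ J, b s₁ ≠ b s₂ := by
    by_contra h
    push_neg at h
    have hconst : b =ᶠ[nhds s₀] fun _ => b s₀ := by
      filter_upwards [hJo.mem_nhds hs₀] with x hx using h x hx s₀ hs₀
    have : deriv b s₀ = 0 := by rw [hconst.deriv_eq]; exact deriv_const _ _
    exact hb' s₀ hs₀ this
  -- key relation P from h1 + h2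
  have P : ∀ s ∈ J, ∀ t ∈ I,
      deriv (deriv (deriv q)) t / deriv q t * (q t + b s) + deriv (deriv b) s
        - deriv (deriv q) t - 3 * m * (q t + b s) ^ 2 = 0 := by
    intro s hs t ht
    have e1 := h1 s hs t ht
    have e2 := h2 s hs t ht
    have hw : q t + b s ≠ 0 := (hpos s hs t ht).ne'
    have key : (deriv (deriv (deriv q)) t / deriv q t * (q t + b s) + deriv (deriv b) s
        - deriv (deriv q) t - 3 * m * (q t + b s) ^ 2) * (q t + b s) = 0 := by
      linear_combination -e1 - e2
    exact (mul_eq_zero.mp key).resolve_right hw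
  obtain ⟨L, hLdef⟩ : ∃ L : ℝ, L = ((deriv (deriv b) s₂ - 3 * m * (b s₂) ^ 2)
      - (deriv (deriv b) s₁ - 3 * m * (b s₁) ^ 2)) / (b s₁ - b s₂) := ⟨_, rfl⟩
  have hd : b s₁ - b s₂ ≠ 0 := sub_ne_zero.mpr hbne
  have hL : ∀ t ∈ I, deriv (deriv (deriv q)) t / deriv q t = L + 6 * m * q t := by
    intro t ht
    have p1 := P s₁ hs₁ t ht
    have p2 := P s₂ hs₂ t ht
    have : deriv (deriv (deriv q)) t / deriv q t - 6 * m * q t = L := by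
      rw [hLdef, eq_div_iff hd]
      linear_combination p1 - p2
    linarith
  -- q''' = (L + 6 m q) q'
  have hq3 : ∀ t ∈ I, deriv (deriv (deriv q)) t = (L + 6 * m * q t) * deriv q t := by
    intro t ht
    have h := hL t ht
    rw [div_eq_iff (hq' t ht)] at h
    exact h
  -- smoothness chain
  have hq1 : ContDiffOn ℝ (⊤ : ℕ∞) (deriv q) I := hq.deriv_of_isOpen hIo (by simp)
  have hq2 : ContDiffOn ℝ (⊤ : ℕ∞) (deriv (deriv q)) I := hq1.deriv_of_isOpen hIo (by simp)
  have hqdiff : ∀ t ∈ I, HasDerivAt q (deriv q t) t := fun t ht =>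
    ((hq.differentiableOn (by simp)).differentiableAt (hIo.mem_nhds ht)).hasDerivAt
  have hq2diff : ∀ t ∈ I, HasDerivAt (deriv (deriv q)) (deriv (deriv (deriv q)) t) t :=
    fun t ht =>
      ((hq2.differentiableOn (by simp)).differentiableAt (hIo.mem_nhds ht)).hasDerivAt
  -- φ = q'' - 3 m q² - L q is constant
  set φ : ℝ → ℝ := fun t => deriv (deriv q) t - 3 * m * (q t) ^ 2 - L * q t with hφdef
  have hφdiff : DifferentiableOn ℝ φ I := by
    intro t ht
    exact (((hq2diff t ht).sub (((hqdiff t ht).pow 2).const_mul (3 * m))).sub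
      ((hqdiff t ht).const_mul L)).differentiableAt.differentiableWithinAt
  have hφ' : ∀ t ∈ I, deriv φ t = 0 := by
    intro t ht
    have h : HasDerivAt φ (deriv (deriv (deriv q)) t
        - 3 * m * (2 * q t ^ (2-1) * deriv q t) - L * deriv q t) t :=
      ((hq2diff t ht).sub (((hqdiff t ht).pow 2).const_mul (3 * m))).sub
        ((hqdiff t ht).const_mul L)
    rw [h.deriv]
    rw [hq3 t ht]
    ring
  have hφconst : ∀ t ∈ I, φ t = φ t₀ := fun t ht =>
    my_const_of_deriv_zero hIo hIconv hφdiff hφ' ht ht₀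
  obtain ⟨K, hKdef⟩ : ∃ K : ℝ, K = deriv (deriv q) t₀ - 3 * m * (q t₀) ^ 2 - L * q t₀ := ⟨_, rfl⟩
  have hK : ∀ t ∈ I, deriv (deriv q) t = 3 * m * (q t) ^ 2 + L * q t + K := by
    intro t ht
    have h := hφconst t ht
    simp only [hφdef] at h
    rw [hKdef]
    linarith
  have hbpp : ∀ s ∈ J, deriv (deriv b) s = 3 * m * (b s) ^ 2 - L * b s + K := by
    intro s hs
    have p := P s hs t₀ ht₀
    have hDt := hL t₀ ht₀
    have hKt := hK t₀ ht₀
    linear_combination p - (q t₀ + b s) * hDt + hKt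
  -- F + G = 0
  have FG : ∀ s ∈ J, ∀ t ∈ I,
      ((deriv q t) ^ 2 - 2 * m * (q t) ^ 3 - L * (q t) ^ 2 - 2 * K * q t)
      + ((deriv b s) ^ 2 - 2 * m * (b s) ^ 3 + L * (b s) ^ 2 - 2 * K * b s + R / 6) = 0 := by
    intro s hs t ht
    have e1 := h1 s hs t ht
    linear_combination e1 + (q t + b s) * (hK t ht) + (q t + b s) * (hbpp s hs)
  refine ⟨L, -2 * K,
    -((deriv q t₀) ^ 2 - 2 * m * (q t₀) ^ 3 - L * (q t₀) ^ 2 - 2 * K * q t₀), ?_, ?_⟩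
  · intro t ht
    have hFGt := FG s₀ hs₀ t ht
    have hFG0 := FG s₀ hs₀ t₀ ht₀
    linear_combination hFGt - hFG0
  · intro s hs
    have := FG s hs t₀ ht₀
    linear_combination this
end

section
/- Let m, R, y, l, α, k ∈ ℝ with m ≠ 0, let I and J be nonempty open intervals, and let q : I → ℝ and b, c : J → ℝ be smooth with q' nowhere zero on I, b' nowhere zero on J, c nowhere zero on J, and q(x₃) + b(x₁) > 0 for all (x₁,x₃) ∈ J × I. Suppose that (q')² − 2m·q³ − l·q² + α·q + k = 0 on I, (b')² − 2m·b³ + l·b² + α·b + R/6 − k = 0 on J, and b''·c = b'·c' + y on J. Then for all (x₁,x₃) ∈ J × I the following four identities hold (q and its derivatives evaluated at x₃; b, c and their derivatives at x₁): (1) m(q+b)³ + R/6 = (q+b)(q''+b'') − (q')² − (b')²; (2) 2m(q+b)³ − R/6 = ((q'''/q')(q+b) − 2q'')(q+b) + (q')² + (b')²; (3) 2m(q+b)³ − R/6 = ((c''/c)(q+b) − c'b'/c − b'' − y/c)(q+b) + (q')² + (b')²; (4) m(q+b)³ + R/6 = (b'c'/c + q'' + y/c)(q+b) − (q')² − (b')².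 -/
open Filter Topology

private lemma aux_hasDerivAt {f : ℝ → ℝ} {s : Set ℝ} (hs : IsOpen s)
    (hf : ContDiffOn ℝ (⊤ : ℕ∞) f s) {t : ℝ} (ht : t ∈ s) :
    HasDerivAt f (deriv f t) t :=
  ((hf.contDiffAt (hs.mem_nhds ht)).differentiableAt (by simp)).hasDerivAt

private lemma aux_deriv_zero {F : ℝ → ℝ} {s : Set ℝ} (hs : IsOpen s)
    {t : ℝ} (ht : t ∈ s) {D : ℝ} (hF : HasDerivAt F D t)
    (h0 : ∀ x ∈ s, F x = 0) : D = 0 := by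
  have h : F =ᶠ[nhds t] fun _ => (0:ℝ) :=
    Filter.eventually_of_mem (hs.mem_nhds ht) h0
  exact hF.unique ((hasDerivAt_const t (0:ℝ)).congr_of_eventuallyEq h)

/-- second derivative from the cubic ODE `(f')² = 2m f³ + ε l f² - α f - C`. -/
private lemma aux_second_deriv {f : ℝ → ℝ} {s : Set ℝ} (hs : IsOpen s)
    (hf : ContDiffOn ℝ (⊤ : ℕ∞) f s) (hf' : ∀ x ∈ s, deriv f x ≠ 0)
    {m l α C : ℝ}
    (hode : ∀ x ∈ s, (deriv f x) ^ 2 - 2 * m * (f x) ^ 3 + l * (f x) ^ 2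
      + α * f x + C = 0) :
    (∀ x ∈ s, deriv (deriv f) x = 3 * m * (f x) ^ 2 - l * f x - α / 2) ∧
    (∀ x ∈ s, deriv (deriv (deriv f)) x = (6 * m * f x - l) * deriv f x) := by
  have hf1 : ContDiffOn ℝ (⊤ : ℕ∞) (deriv f) s := hf.deriv_of_isOpen hs (by simp)
  have hf2 : ContDiffOn ℝ (⊤ : ℕ∞) (deriv (deriv f)) s := hf1.deriv_of_isOpen hs (by simp)
  have h2 : ∀ x ∈ s, deriv (deriv f) x = 3 * m * (f x) ^ 2 - l * f x - α / 2 := by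
    intro x hx
    have H0 := aux_hasDerivAt hs hf hx
    have H1 := aux_hasDerivAt hs hf1 hx
    have hD : HasDerivAt (fun u => (deriv f u) ^ 2 - 2 * m * (f u) ^ 3
        + l * (f u) ^ 2 + α * f u + C)
        (((2:ℕ) * deriv f x ^ (2-1) * deriv (deriv f) x
          - 2 * m * ((3:ℕ) * f x ^ (3-1) * deriv f x))
          + l * ((2:ℕ) * f x ^ (2-1) * deriv f x) + α * deriv f x) x := by
      exact ((((H1.pow 2).sub ((H0.pow 3).const_mul (2*m))).add
        ((H0.pow 2).const_mul l)).add (H0.const_mul α)).add_const C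
    have hz := aux_deriv_zero hs hx hD hode
    have hP : deriv f x * (2 * deriv (deriv f) x
        - (6 * m * (f x) ^ 2 - 2 * l * f x - α)) = 0 := by
      push_cast at hz; linear_combination hz
    rcases mul_eq_zero.mp hP with h | h
    · exact absurd h (hf' x hx)
    · linarith
  refine ⟨h2, fun x hx => ?_⟩
  have H0 := aux_hasDerivAt hs hf hx
  have heq : deriv (deriv f) =ᶠ[nhds x]
      fun u => 3 * m * (f u) ^ 2 - l * f u - α / 2 :=
    Filter.eventually_of_mem (hs.mem_nhds hx) (fun u hu => h2 u hu)
  have h1 : HasDerivAt (fun u => 3 * m * (f u) ^ 2 - l * f u - α / 2)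
      (3 * m * ((2:ℕ) * f x ^ (2-1) * deriv f x) - l * deriv f x) x := by
    exact (((H0.pow 2).const_mul (3*m)).sub (H0.const_mul l)).sub_const (α/2)
  have h2' : HasDerivAt (deriv (deriv f))
      (3 * m * ((2:ℕ) * f x ^ (2-1) * deriv f x) - l * deriv f x) x :=
    h1.congr_of_eventuallyEq heq
  have := (aux_hasDerivAt hs hf2 hx).unique h2'
  push_cast at this; linear_combination this

/-- Lemma 4.5 (converse direction) in analytic form: solutions of the cubic ODEs
for `q` and `b` together with `b''c = b'c' + y` satisfy the four coordinate
identities expressing that `g = (q(x₃)+b(x₁))^{−2}(dx₁² + (q')²dx₂² + dx₃²)` with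
potential `f = c(x₁)/(q+b) − a₁` solves the geometric equation. -/
theorem stmt_7 (m R y l α k : ℝ) (hm : m ≠ 0) (I J : Set ℝ)
    (hIo : IsOpen I) (hIc : I.OrdConnected) (hIne : I.Nonempty)
    (hJo : IsOpen J) (hJc : J.OrdConnected) (hJne : J.Nonempty)
    (q b c : ℝ → ℝ)
    (hq : ContDiffOn ℝ (⊤ : ℕ∞) q I) (hb : ContDiffOn ℝ (⊤ : ℕ∞) b J)
    (hc : ContDiffOn ℝ (⊤ : ℕ∞) c J)
    (hq' : ∀ t ∈ I, deriv q t ≠ 0) (hb' : ∀ s ∈ J, deriv b s ≠ 0)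
    (hcne : ∀ s ∈ J, c s ≠ 0)
    (hpos : ∀ s ∈ J, ∀ t ∈ I, 0 < q t + b s)
    (hqode : ∀ t ∈ I,
      (deriv q t) ^ 2 - 2 * m * (q t) ^ 3 - l * (q t) ^ 2 + α * q t + k = 0)
    (hbode : ∀ s ∈ J,
      (deriv b s) ^ 2 - 2 * m * (b s) ^ 3 + l * (b s) ^ 2 + α * b s
        + R / 6 - k = 0)
    (hbc : ∀ s ∈ J, deriv (deriv b) s * c s = deriv b s * deriv c s + y) :
    ∀ s ∈ J, ∀ t ∈ I,
      (m * (q t + b s) ^ 3 + R / 6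
        = (q t + b s) * (deriv (deriv q) t + deriv (deriv b) s)
          - (deriv q t) ^ 2 - (deriv b s) ^ 2) ∧
      (2 * m * (q t + b s) ^ 3 - R / 6
        = ((deriv (deriv (deriv q)) t / deriv q t) * (q t + b s)
            - 2 * deriv (deriv q) t) * (q t + b s)
          + (deriv q t) ^ 2 + (deriv b s) ^ 2) ∧
      (2 * m * (q t + b s) ^ 3 - R / 6
        = ((deriv (deriv c) s / c s) * (q t + b s)
            - deriv c s * deriv b s / c s - deriv (deriv b) s - y / c s) * (q t + b s)
          + (deriv q t) ^ 2 + (deriv b s) ^ 2) ∧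
      (m * (q t + b s) ^ 3 + R / 6
        = (deriv b s * deriv c s / c s + deriv (deriv q) t + y / c s) * (q t + b s)
          - (deriv q t) ^ 2 - (deriv b s) ^ 2) := by
  -- second/third derivatives of q and b
  have hqode' : ∀ x ∈ I, (deriv q x) ^ 2 - 2 * m * (q x) ^ 3 + (-l) * (q x) ^ 2
      + α * q x + k = 0 := by intro x hx; linear_combination hqode x hx
  have hbode' : ∀ x ∈ J, (deriv b x) ^ 2 - 2 * m * (b x) ^ 3 + l * (b x) ^ 2
      + α * b x + (R / 6 - k) = 0 := by intro x hx; linear_combination hbode x hx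
  obtain ⟨hq2, hq3⟩ := aux_second_deriv hIo hq hq' hqode'
  obtain ⟨hb2, hb3⟩ := aux_second_deriv hJo hb hb' hbode'
  -- second derivative of c
  have hb1 : ContDiffOn ℝ (⊤ : ℕ∞) (deriv b) J := hb.deriv_of_isOpen hJo (by simp)
  have hb2' : ContDiffOn ℝ (⊤ : ℕ∞) (deriv (deriv b)) J := hb1.deriv_of_isOpen hJo (by simp)
  have hc1 : ContDiffOn ℝ (⊤ : ℕ∞) (deriv c) J := hc.deriv_of_isOpen hJo (by simp)
  have hc2 : ∀ s ∈ J, deriv (deriv c) s = (6 * m * b s - l) * c s := by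
    intro s hs
    have HB1 := aux_hasDerivAt hJo hb1 hs
    have HB2 := aux_hasDerivAt hJo hb2' hs
    have HC0 := aux_hasDerivAt hJo hc hs
    have HC1 := aux_hasDerivAt hJo hc1 hs
    have hD : HasDerivAt
        (fun u => deriv (deriv b) u * c u - deriv b u * deriv c u - y)
        ((deriv (deriv (deriv b)) s * c s + deriv (deriv b) s * deriv c s)
          - (deriv (deriv b) s * deriv c s + deriv b s * deriv (deriv c) s)) s :=
      ((HB2.mul HC0).sub (HB1.mul HC1)).sub_const y
    have hz := aux_deriv_zero hJo hs hD
      (fun u hu => by linear_combination hbc u hu)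
    have hP : deriv b s * (deriv (deriv c) s - (6 * m * b s - l) * c s) = 0 := by
      linear_combination -hz + c s * hb3 s hs
    rcases mul_eq_zero.mp hP with h | h
    · exact absurd h (hb' s hs)
    · linarith
  intro s hs t ht
  have e1 : (deriv q t) ^ 2 = 2 * m * (q t) ^ 3 + l * (q t) ^ 2 - α * q t - k := by
    linarith [hqode t ht]
  have e2 : (deriv b s) ^ 2 = 2 * m * (b s) ^ 3 - l * (b s) ^ 2 - α * b s
      - R / 6 + k := by linarith [hbode s hs]
  have e3 : deriv (deriv q) t = 3 * m * (q t) ^ 2 + l * q t - α / 2 := by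
    have := hq2 t ht; linarith
  have e4 : deriv (deriv b) s = 3 * m * (b s) ^ 2 - l * b s - α / 2 := hb2 s hs
  have e5 : deriv (deriv (deriv q)) t = (6 * m * q t + l) * deriv q t := by
    have := hq3 t ht; linear_combination this
  have e6 : deriv (deriv c) s = (6 * m * b s - l) * c s := hc2 s hs
  have hcs := hcne s hs
  have e8 : deriv c s * deriv b s / c s = deriv (deriv b) s - y / c s := by
    rw [eq_sub_iff_add_eq, ← add_div, div_eq_iff hcs]
    linear_combination -(hbc s hs)
  have e9 : deriv b s * deriv c s / c s = deriv (deriv b) s - y / c s := by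
    rw [mul_comm]; exact e8
  refine ⟨?_, ?_, ?_, ?_⟩
  · rw [e3, e4, e1, e2]; ring
  · rw [e5, mul_div_assoc, div_self (hq' t ht), mul_one, e3, e1, e2]; ring
  · rw [e6, mul_div_assoc, div_self hcs, mul_one, e8, e4, e1, e2]; ring
  · rw [e9, e3, e4, e1, e2]; ring
end

section
/- Let I be a nonempty open interval and let p : I → ℝ be smooth and positive with p' nowhere zero, satisfying p·p''' + 2p'·p'' = 0 on I (equivalently 2p''/p + p'''/p' = 0). Then there exist constants β, γ ∈ ℝ such that (p')² = β·p^{−1} + γ on I and (p')² + 2p·p'' = γ on I. Moreover, if p'' is not identically zero on I, then β ≠ 0. -/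
/-- ODE step in the proof of Lemma 4.6: `p·p''' + 2p'·p'' = 0` integrates to
`(p')² = β·p⁻¹ + γ` and `(p')² + 2p·p'' = γ`; if `p''` is not identically zero
then `β ≠ 0`. -/
theorem stmt_8 (I : Set ℝ)
    (hIo : IsOpen I) (hIc : I.OrdConnected) (hIne : I.Nonempty)
    (p : ℝ → ℝ) (hp : ContDiffOn ℝ (⊤ : ℕ∞) p I)
    (hppos : ∀ t ∈ I, 0 < p t) (hp' : ∀ t ∈ I, deriv p t ≠ 0)
    (hode : ∀ t ∈ I,
      p t * deriv (deriv (deriv p)) t + 2 * deriv p t * deriv (deriv p) t = 0) :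
    ∃ β γ : ℝ,
      (∀ t ∈ I, (deriv p t) ^ 2 = β * (p t)⁻¹ + γ) ∧
      (∀ t ∈ I, (deriv p t) ^ 2 + 2 * p t * deriv (deriv p) t = γ) ∧
      ((¬ ∀ t ∈ I, deriv (deriv p) t = 0) → β ≠ 0) := by
  obtain ⟨t₀, ht₀⟩ := hIne
  have hconv : Convex ℝ I := convex_iff_ordConnected.mpr hIc
  have hp1 : ContDiffOn ℝ (⊤ : ℕ∞) (deriv p) I := hp.deriv_of_isOpen hIo (by simp)
  have hp2 : ContDiffOn ℝ (⊤ : ℕ∞) (deriv (deriv p)) I := hp1.deriv_of_isOpen hIo (by simp)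
  have hdiffAt : ∀ (f : ℝ → ℝ), ContDiffOn ℝ (⊤ : ℕ∞) f I → ∀ t ∈ I, HasDerivAt f (deriv f t) t := by
    intro f hf t ht
    exact ((hf.differentiableOn (by simp)).differentiableAt (hIo.mem_nhds ht)).hasDerivAt
  have hd0 := hdiffAt p hp
  have hd1 := hdiffAt (deriv p) hp1
  have hd2 := hdiffAt (deriv (deriv p)) hp2
  set F : ℝ → ℝ := fun t => (deriv p t) ^ 2 + 2 * p t * deriv (deriv p) t with hFdef
  have hF : ∀ t ∈ I, HasDerivAt F 0 t := by
    intro t ht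
    have h := ((hd1 t ht).pow 2).add ((((hd0 t ht).const_mul 2).mul (hd2 t ht)))
    refine h.congr_deriv (Eq.symm ?_)
    have hh := hode t ht
    push_cast
    linear_combination (-2 : ℝ) * hh
  have hconstF : ∀ t ∈ I, F t = F t₀ := by
    intro t ht
    refine hconv.is_const_of_fderivWithin_eq_zero (fun s hs => ((hF s hs).differentiableAt).differentiableWithinAt) (fun s hs => ?_) ht ht₀
    rw [fderivWithin_of_isOpen hIo hs, (hF s hs).hasFDerivAt.fderiv]
    ext; simp
  set γ : ℝ := F t₀ with hγ
  set G : ℝ → ℝ := fun t => p t * ((deriv p t) ^ 2 - γ) with hGdef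
  have hG : ∀ t ∈ I, HasDerivAt G 0 t := by
    intro t ht
    have h := (hd0 t ht).mul (((hd1 t ht).pow 2).sub_const γ)
    have hc := hconstF t ht
    simp only [hFdef] at hc
    refine h.congr_deriv (Eq.symm ?_)
    push_cast [Pi.pow_apply]
    linear_combination (-(deriv p t)) * hc
  have hconstG : ∀ t ∈ I, G t = G t₀ := by
    intro t ht
    refine hconv.is_const_of_fderivWithin_eq_zero (fun s hs => ((hG s hs).differentiableAt).differentiableWithinAt) (fun s hs => ?_) ht ht₀
    rw [fderivWithin_of_isOpen hIo hs, (hG s hs).hasFDerivAt.fderiv]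
    ext; simp
  refine ⟨G t₀, γ, ?_, ?_, ?_⟩
  · intro t ht
    have h := hconstG t ht
    have hpt := (hppos t ht).ne'
    have h' : G t₀ = p t * (deriv p t ^ 2 - γ) := h.symm
    rw [h', mul_comm (p t), mul_assoc, mul_inv_cancel₀ hpt]
    ring
  · intro t ht
    exact hconstF t ht
  · intro hne hβ
    apply hne
    intro t ht
    have h := hconstG t ht
    rw [hβ, hGdef] at h
    have hpt := hppos t ht
    have h1 : (deriv p t) ^ 2 = γ := by
      have := mul_eq_zero.mp h
      rcases this with h' | h'
      · exact absurd h' hpt.ne'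
      · linarith
    have h2 := hconstF t ht
    simp only [hFdef] at h2
    nlinarith [h1, h2, hpt]
end

section
/- Let a₁, a₂, α, R ∈ ℝ, let I and J be nonempty open intervals, let p : I → ℝ be smooth and positive with p' nowhere zero, satisfying −4p''/p − 2p'''/p' = R on I, and suppose that the functions p''/p and p'''/p' are not identically equal on I. Let c₁ : J → ℝ be smooth, and suppose that for all (x₁,x₃) ∈ J × I (with p and its derivatives evaluated at x₃ and c₁ and its derivatives at x₁): c₁'' + c₁·(p')² = −2p''·(a₁ + c₁·p + α) + a₂·p − (R/2)·p·(c₁·p + α), and c₁·p'' = (a₁ + c₁·p + α)·(−p''/p − p'''/p') + a₂ − (R/2)·(c₁·p + α). Then α = −a₁ and a₂ = −(R/2)·a₁. In particular, if a₁ = 0 then a₂ = 0, and if a₁ = 1 and a₂ = −R/3 then R = 0. -/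
/-- Central computation of Lemma 4.6: for `g = p²dx₁² + (p')²dx₂² + dx₃²` with
potential `f = c₁·p + α`, the (E₁,E₁)- and (E₂,E₂)-components of the geometric
equation, together with `λ₁ ≠ λ₂` (i.e. `p''/p` and `p'''/p'` not identically
equal), force `α = −a₁` and `a₂ = −(R/2)a₁`. -/
theorem stmt_9 (a₁ a₂ α R : ℝ) (I J : Set ℝ)
    (hIo : IsOpen I) (hIc : I.OrdConnected) (hIne : I.Nonempty)
    (hJo : IsOpen J) (hJc : J.OrdConnected) (hJne : J.Nonempty)
    (p : ℝ → ℝ) (hp : ContDiffOn ℝ (⊤ : ℕ∞) p I)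
    (hppos : ∀ t ∈ I, 0 < p t) (hp' : ∀ t ∈ I, deriv p t ≠ 0)
    (hR : ∀ t ∈ I,
      -4 * deriv (deriv p) t / p t
        - 2 * deriv (deriv (deriv p)) t / deriv p t = R)
    (hne : ∃ t ∈ I,
      deriv (deriv p) t / p t ≠ deriv (deriv (deriv p)) t / deriv p t)
    (c₁ : ℝ → ℝ) (hc₁ : ContDiffOn ℝ (⊤ : ℕ∞) c₁ J)
    (heq1 : ∀ s ∈ J, ∀ t ∈ I,
      deriv (deriv c₁) s + c₁ s * (deriv p t) ^ 2
        = -2 * deriv (deriv p) t * (a₁ + c₁ s * p t + α) + a₂ * p t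
          - (R / 2) * p t * (c₁ s * p t + α))
    (heq2 : ∀ s ∈ J, ∀ t ∈ I,
      c₁ s * deriv (deriv p) t
        = (a₁ + c₁ s * p t + α)
            * (-(deriv (deriv p) t / p t) - deriv (deriv (deriv p)) t / deriv p t)
          + a₂ - (R / 2) * (c₁ s * p t + α)) :
    α = -a₁ ∧ a₂ = -(R / 2) * a₁ ∧
      (a₁ = 0 → a₂ = 0) ∧ (a₁ = 1 ∧ a₂ = -R / 3 → R = 0) := by
  obtain ⟨s₀, hs₀⟩ := hJne
  obtain ⟨t₁, ht₁, hne₁⟩ := hne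
  -- Key identity: (a₁+α)·(p''/p) = −a₁R/2 − a₂ on I
  have key : ∀ t ∈ I, (a₁ + α) * (deriv (deriv p) t / p t) = -(a₁ * R) / 2 - a₂ := by
    intro t ht
    have hA : p t ≠ 0 := (hppos t ht).ne'
    have hB : deriv p t ≠ 0 := hp' t ht
    have h2 := heq2 s₀ hs₀ t ht
    have hr := hR t ht
    set l := deriv (deriv p) t / p t with hl
    set m := deriv (deriv (deriv p)) t / deriv p t with hm
    have hC : deriv (deriv p) t = l * p t := by
      rw [hl]; field_simp
    have hD : deriv (deriv (deriv p)) t = m * deriv p t := by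
      rw [hm]; field_simp
    rw [hC] at h2
    have hr2 : R = -4 * l - 2 * m := by
      rw [← hr, hl, hm, hC, hD]; field_simp
    linear_combination (-1 : ℝ) * h2 + ((a₁ + α + c₁ s₀ * p t) / 2) * hr2
  have main : a₁ + α = 0 := by
    by_contra hcase
    set c := (-(a₁ * R) / 2 - a₂) / (a₁ + α) with hc
    have hpp : ∀ t ∈ I, deriv (deriv p) t = c * p t := by
      intro t ht
      have hA : p t ≠ 0 := (hppos t ht).ne'
      have h := key t ht
      rw [hc]
      field_simp at h ⊢
      linarith [h]
    have hdiff : ∀ t ∈ I, DifferentiableAt ℝ p t := fun t ht =>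
      (hp.contDiffAt (hIo.mem_nhds ht)).differentiableAt (by simp)
    have hppp : ∀ t ∈ I, deriv (deriv (deriv p)) t = c * deriv p t := by
      intro t ht
      have hev : deriv (deriv p) =ᶠ[nhds t] fun x => c * p x := by
        filter_upwards [hIo.mem_nhds ht] with x hx using hpp x hx
      rw [hev.deriv_eq, deriv_const_mul c (hdiff t ht)]
    apply hne₁
    rw [hpp t₁ ht₁, hppp t₁ ht₁,
      mul_div_assoc, mul_div_assoc, div_self (hppos t₁ ht₁).ne', div_self (hp' t₁ ht₁)]
  have h0 := key t₁ ht₁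
  rw [main, zero_mul] at h0
  refine ⟨by linarith, by linarith, fun h => by simp [h] at h0 ⊢; linarith,
    fun ⟨h1, h2⟩ => by rw [h1, h2] at h0; linarith⟩
end

section
/- Let β, γ ∈ ℝ, let I and J be nonempty open intervals, let p : I → ℝ be smooth and positive with p' nowhere zero, satisfying (p')² = β·p^{−1} + γ on I, and let c₁ : J → ℝ be smooth with c₁'' + γ·c₁ = 0 on J. Then p·p''' + 2p'·p'' = 0 on I, and c₁''(x₁) + c₁(x₁)·(p'(x₃)² + 2p(x₃)·p''(x₃)) = 0 for all (x₁,x₃) ∈ J × I. -/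
/-- Converse verification in Lemma 4.6 / Theorem 4(iii): if `(p')² = β·p⁻¹ + γ`
and `c₁'' + γ·c₁ = 0`, then `p·p''' + 2p'·p'' = 0` (vanishing scalar curvature)
and `c₁'' + c₁·((p')² + 2p·p'') = 0`. -/
theorem stmt_10 (β γ : ℝ) (I J : Set ℝ)
    (hIo : IsOpen I) (hIc : I.OrdConnected) (hIne : I.Nonempty)
    (hJo : IsOpen J) (hJc : J.OrdConnected) (hJne : J.Nonempty)
    (p : ℝ → ℝ) (hp : ContDiffOn ℝ (⊤ : ℕ∞) p I)
    (hppos : ∀ t ∈ I, 0 < p t) (hp' : ∀ t ∈ I, deriv p t ≠ 0)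
    (hode : ∀ t ∈ I, (deriv p t) ^ 2 = β * (p t)⁻¹ + γ)
    (c₁ : ℝ → ℝ) (hc₁ : ContDiffOn ℝ (⊤ : ℕ∞) c₁ J)
    (hcode : ∀ s ∈ J, deriv (deriv c₁) s + γ * c₁ s = 0) :
    (∀ t ∈ I,
      p t * deriv (deriv (deriv p)) t + 2 * deriv p t * deriv (deriv p) t = 0) ∧
    ∀ s ∈ J, ∀ t ∈ I,
      deriv (deriv c₁) s
        + c₁ s * ((deriv p t) ^ 2 + 2 * p t * deriv (deriv p) t) = 0 := by
  have hp1 : ContDiffOn ℝ (⊤ : ℕ∞) (deriv p) I := hp.deriv_of_isOpen hIo (by simp)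
  have hp2 : ContDiffOn ℝ (⊤ : ℕ∞) (deriv (deriv p)) I := hp1.deriv_of_isOpen hIo (by simp)
  have hd0 : ∀ t ∈ I, HasDerivAt p (deriv p t) t := fun t ht =>
    ((hp.differentiableOn (by simp)).differentiableAt (hIo.mem_nhds ht)).hasDerivAt
  have hd1 : ∀ t ∈ I, HasDerivAt (deriv p) (deriv (deriv p) t) t := fun t ht =>
    ((hp1.differentiableOn (by simp)).differentiableAt (hIo.mem_nhds ht)).hasDerivAt
  have hd2 : ∀ t ∈ I, HasDerivAt (deriv (deriv p)) (deriv (deriv (deriv p)) t) t := fun t ht =>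
    ((hp2.differentiableOn (by simp)).differentiableAt (hIo.mem_nhds ht)).hasDerivAt
  have eq2 : ∀ t ∈ I, (deriv p t) ^ 2 + 2 * p t * deriv (deriv p) t = γ := by
    intro t ht
    have hpne : p t ≠ 0 := (hppos t ht).ne'
    have hp'ne : deriv p t ≠ 0 := hp' t ht
    have hL : HasDerivAt (fun t => (deriv p t) ^ 2)
        ((2 : ℕ) * deriv p t ^ (2 - 1) * deriv (deriv p) t) t := (hd1 t ht).pow 2
    have hR : HasDerivAt (fun t => β * (p t)⁻¹ + γ)
        (β * (-(deriv p t) / p t ^ 2)) t :=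
      (((hd0 t ht).inv hpne).const_mul β).add_const γ
    have heq : (fun t => β * (p t)⁻¹ + γ) =ᶠ[nhds t] (fun t => (deriv p t) ^ 2) := by
      filter_upwards [hIo.mem_nhds ht] with x hx using (hode x hx).symm
    have key : β * (-(deriv p t) / p t ^ 2)
        = (2 : ℕ) * deriv p t ^ (2 - 1) * deriv (deriv p) t :=
      hR.unique (hL.congr_of_eventuallyEq heq)
    have key' : deriv p t * (2 * p t ^ 2 * deriv (deriv p) t) = deriv p t * (-β) := by
      field_simp at key
      push_cast at key
      linarith [key]
    have key2 : 2 * p t ^ 2 * deriv (deriv p) t = -β := mul_left_cancel₀ hp'ne key'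
    have hβ : β * (p t)⁻¹ + 2 * p t * deriv (deriv p) t = 0 := by
      field_simp
      linarith
    rw [hode t ht]
    linarith
  constructor
  · intro t ht
    have hF : HasDerivAt (fun t => (deriv p t) ^ 2 + 2 * p t * deriv (deriv p) t)
        ((2 : ℕ) * deriv p t ^ (2 - 1) * deriv (deriv p) t
          + 2 * (deriv p t * deriv (deriv p) t + p t * deriv (deriv (deriv p)) t)) t := by
      have := ((hd1 t ht).pow 2).add (((hd0 t ht).mul (hd2 t ht)).const_mul 2)
      have hfun : (fun t => (deriv p t) ^ 2 + 2 * p t * deriv (deriv p) t)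
          = deriv p ^ 2 + fun y => 2 * (p * deriv (deriv p)) y := by
        ext x
        simp only [Pi.add_apply, Pi.pow_apply, Pi.mul_apply]
        ring
      rw [hfun]
      exact this
    have heqF : (fun t => (deriv p t) ^ 2 + 2 * p t * deriv (deriv p) t)
        =ᶠ[nhds t] (fun _ => γ) := by
      filter_upwards [hIo.mem_nhds ht] with x hx using eq2 x hx
    have h0 : HasDerivAt (fun t => (deriv p t) ^ 2 + 2 * p t * deriv (deriv p) t) 0 t :=
      (hasDerivAt_const t γ).congr_of_eventuallyEq heqF
    have hD := hF.unique h0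
    push_cast at hD
    nlinarith [hD]
  · intro s hs t ht
    have h1 := hcode s hs
    rw [eq2 t ht]
    linarith
end

section
/- Let β, γ ∈ ℝ with β ≠ 0, and let p : ℝ → ℝ be smooth and positive, satisfying (p')² = β·p^{−1} + γ on ℝ. Suppose a < b are real numbers with p'(a) = 0, p'(b) = 0, and p' nowhere zero on the open interval (a,b). Then p(a) = p(b), and p''(a) + p''(b) = −β/p(a)², which is nonzero. -/
/-- Remark 4.7: for a smooth positive solution `p` of `(p')² = β·p⁻¹ + γ` with
`β ≠ 0`, two consecutive critical points `a < b` of `p` satisfy `p a = p b` and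
`p''(a) + p''(b) = −β/p(a)² ≠ 0`, so the metric cannot close up compactly. -/
theorem stmt_11 (β γ : ℝ) (hβ : β ≠ 0)
    (p : ℝ → ℝ) (hp : ContDiff ℝ (⊤ : ℕ∞) p) (hppos : ∀ t, 0 < p t)
    (hode : ∀ t, (deriv p t) ^ 2 = β * (p t)⁻¹ + γ)
    (a b : ℝ) (hab : a < b)
    (hpa : deriv p a = 0) (hpb : deriv p b = 0)
    (hne : ∀ t ∈ Set.Ioo a b, deriv p t ≠ 0) :
    p a = p b ∧
    deriv (deriv p) a + deriv (deriv p) b = -β / (p a) ^ 2 ∧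
    deriv (deriv p) a + deriv (deriv p) b ≠ 0 := by
  have hdp : Differentiable ℝ p := hp.differentiable (by simp)
  have hp' : ContDiff ℝ (⊤ : ℕ∞) p := hp.of_le (by simp)
  have hd2 : ContDiff ℝ (⊤ : ℕ∞) (deriv p) := (contDiff_infty_iff_deriv.mp hp').2
  have hdd : Differentiable ℝ (deriv p) := hd2.differentiable (by simp)
  -- p a = p b
  have hA : β * (p a)⁻¹ + γ = 0 := by have := hode a; rw [hpa] at this; linarith [this]
  have hB : β * (p b)⁻¹ + γ = 0 := by have := hode b; rw [hpb] at this; linarith [this]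
  have hinv : (p a)⁻¹ = (p b)⁻¹ := by
    have : β * (p a)⁻¹ = β * (p b)⁻¹ := by linarith
    exact mul_left_cancel₀ hβ this
  have hpab : p a = p b := by
    have := inv_inj.mp hinv
    exact this
  -- key differential relation
  have key : ∀ t, 2 * deriv p t ^ 1 * deriv (deriv p) t = β * (-deriv p t / p t ^ 2) := by
    intro t
    have h1 : HasDerivAt (fun s => (deriv p s) ^ 2)
        (2 * deriv p t ^ 1 * deriv (deriv p) t) t := by
      simpa using ((hdd t).hasDerivAt).fun_pow 2
    have h2 : HasDerivAt (fun s => β * (p s)⁻¹ + γ)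
        (β * (-deriv p t / p t ^ 2)) t :=
      (((hdp t).hasDerivAt.inv (hppos t).ne').const_mul β).add_const γ
    have h1' : HasDerivAt (fun s => (deriv p s) ^ 2)
        (β * (-deriv p t / p t ^ 2)) t :=
      h2.congr_of_eventuallyEq (Filter.Eventually.of_forall hode)
    exact h1.unique h1'
  -- on the open interval the second derivative has a closed form
  have hIoo : Set.EqOn (deriv (deriv p)) (fun t => -β / (2 * p t ^ 2)) (Set.Ioo a b) := by
    intro t ht
    have h := key t
    have hpt : p t ≠ 0 := (hppos t).ne'
    have hnz := hne t ht
    field_simp at h ⊢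
    have hfac : deriv p t * (2 * (deriv (deriv p) t * p t ^ 2) + β) = 0 := by rw [show 2 * (deriv (deriv p) t * p t ^ 2) + β = 0 by linarith [h]]; ring
    rcases mul_eq_zero.mp hfac with h0 | h0
    · exact absurd h0 hnz
    · linarith
  have hcontf : Continuous (deriv (deriv p)) :=
    ((contDiff_infty_iff_deriv.mp hd2).2.continuous)
  have hcontg : Continuous (fun t => -β / (2 * p t ^ 2)) := by
    apply Continuous.div continuous_const
    · exact continuous_const.mul ((hp.continuous.pow 2))
    · intro t
      have := (hppos t).ne'
      positivity
  have hclos : Set.EqOn (deriv (deriv p)) (fun t => -β / (2 * p t ^ 2))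
      (Set.Icc a b) := by
    have := hIoo.closure hcontf hcontg
    rwa [closure_Ioo hab.ne] at this
  have ha2 : deriv (deriv p) a = -β / (2 * p a ^ 2) :=
    hclos (Set.left_mem_Icc.mpr hab.le)
  have hb2 : deriv (deriv p) b = -β / (2 * p b ^ 2) :=
    hclos (Set.right_mem_Icc.mpr hab.le)
  have hpa0 : p a ≠ 0 := (hppos a).ne'
  have hsum : deriv (deriv p) a + deriv (deriv p) b = -β / (p a) ^ 2 := by
    rw [ha2, hb2, ← hpab]
    field_simp
    ring
  refine ⟨hpab, hsum, ?_⟩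
  rw [hsum]
  intro h
  apply hβ
  have : -β = 0 := by
    field_simp at h
    linarith [h]
  linarith
end
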